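/- For nonnegative integers a, b, the identity ∑_{k=0}^{b} [a+b+1 choose b-k]_q [a+k choose a]_q [a+k choose b]_q (-1)^k q^{k(a-b+k)+a+k-C(a+k+1,2)} = (-1)^b q^{ab - C(a,2) - C(b,2)} holds in ℤ[q, q^{-1}], where C(m,2) = m(m-1)/2. -/

import Mathlib

/-!
Induction on `a`, writing the sum as `S(a) = ∑ₖ (-1)^k q^{e(a,k)} F(a,k)`. The quotients
`F(a+1,k) / F(a,k)` and `F(a,k+1) / F(a,k)` are products of quotients `(1 - q^m) / (1 - q^n)`;
this gives a three-term recurrence in `k`, by which `(1 - q^{a+1})^2` times the `k`-th summand of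
`S(a+1) - q^{b-a} S(a)` equals `W(k) - W(k+1)` for an explicit `W` vanishing at `k = 0` and at
`k = b + 1`. Hence `S(a+1) = q^{b-a} S(a)`, while `S(0)` reduces to its term `k = b`.
-/

open Polynomial Finset

/-- The q-integer `[n]_q = 1 + q + ⋯ + q^{n-1}` as a polynomial in `ℤ[q]`. -/
noncomputable def qint (n : ℕ) : Polynomial ℤ := ∑ i ∈ Finset.range n, X ^ i

/-- The q-factorial `[n]_q! = [n]_q [n-1]_q ⋯ [1]_q`. -/
noncomputable def qfact : ℕ → Polynomial ℤ
  | 0 => 1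
  | n + 1 => qint (n + 1) * qfact n

/-- The Gaussian (q-)binomial coefficient `[n choose k]_q` as a polynomial in `ℤ[q]`,
defined by the q-Pascal recurrence; it equals `∏_{i=1}^k (1-q^{n-i+1})/(1-q^i)` for
`0 ≤ k ≤ n` and `0` otherwise. -/
noncomputable def qbinom : ℕ → ℕ → Polynomial ℤ
  | _, 0 => 1
  | 0, _ + 1 => 0
  | n + 1, k + 1 => qbinom n k + X ^ (k + 1) * qbinom n (k + 1)

lemma qbinom_zero_right (n : ℕ) : qbinom n 0 = 1 := by cases n <;> rfl

lemma qbinom_succ_succ (n k : ℕ) :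
    qbinom (n + 1) (k + 1) = qbinom n k + X ^ (k + 1) * qbinom n (k + 1) := rfl

lemma qbinom_eq_zero_of_lt : ∀ {n k : ℕ}, n < k → qbinom n k = 0
  | 0, _ + 1, _ => rfl
  | n + 1, k + 1, h => by
    rw [qbinom_succ_succ, qbinom_eq_zero_of_lt (by omega : n < k),
      qbinom_eq_zero_of_lt (by omega : n < k + 1), mul_zero, add_zero]

lemma qbinom_self : ∀ n : ℕ, qbinom n n = 1
  | 0 => rfl
  | n + 1 => by
    rw [qbinom_succ_succ, qbinom_self n, qbinom_eq_zero_of_lt n.lt_succ_self, mul_zero, add_zero]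

lemma qfact_succ (n : ℕ) : qfact (n + 1) = qint (n + 1) * qfact n := rfl

lemma qint_add (m n : ℕ) : qint (m + n) = qint m + X ^ m * qint n := by
  simp only [qint, sum_range_add, pow_add, mul_sum]

lemma one_sub_X_mul_qint (n : ℕ) : (1 - X) * qint n = 1 - X ^ n := mul_neg_geom_sum X n

lemma qint_ne_zero {n : ℕ} (hn : n ≠ 0) : qint n ≠ 0 := fun h => by
  simpa [qint, eval_finsetSum, hn] using congrArg (eval 1) h

lemma qfact_ne_zero : ∀ n : ℕ, qfact n ≠ 0
  | 0 => one_ne_zero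
  | n + 1 => mul_ne_zero (qint_ne_zero n.succ_ne_zero) (qfact_ne_zero n)

lemma one_sub_X_pow_succ_ne_zero (n : ℕ) : (1 - X ^ (n + 1) : ℤ[X]) ≠ 0 := fun h => by
  simpa [coeff_one] using congrArg (coeff · (n + 1)) h

lemma qbinom_add_mul_qfact_mul_qfact : ∀ m k : ℕ,
    qbinom (m + k) k * qfact m * qfact k = qfact (m + k)
  | m, 0 => by simp [qbinom_zero_right, qfact]
  | 0, k + 1 => by simp [qbinom_self, qfact]
  | m + 1, k + 1 => by
    have h₁ := qbinom_add_mul_qfact_mul_qfact (m + 1) k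
    have h₂ := qbinom_add_mul_qfact_mul_qfact m (k + 1)
    rw [Nat.add_right_comm, qfact_succ m] at h₁
    rw [← Nat.add_assoc, qfact_succ k] at h₂
    rw [show m + 1 + (k + 1) = m + k + 1 + 1 by ring, qbinom_succ_succ, qfact_succ (m + k + 1),
      show m + k + 1 + 1 = (k + 1) + (m + 1) by ring, qint_add, qfact_succ k, qfact_succ m]
    linear_combination qint (k + 1) * h₁ + X ^ (k + 1) * qint (m + 1) * h₂

lemma qbinom_symm_add (m k : ℕ) : qbinom (m + k) m = qbinom (m + k) k := by
  refine mul_right_cancel₀ (mul_ne_zero (qfact_ne_zero m) (qfact_ne_zero k)) ?_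
  have h := qbinom_add_mul_qfact_mul_qfact k m
  rw [Nat.add_comm k m] at h
  linear_combination h - qbinom_add_mul_qfact_mul_qfact m k

lemma qbinom_succ_right_eq (n k : ℕ) :
    qbinom n (k + 1) * (1 - X ^ (k + 1)) = qbinom n k * (1 - X ^ (n - k)) := by
  rcases lt_or_ge k n with hk | hk
  · obtain ⟨m, rfl⟩ := Nat.exists_eq_add_of_lt hk
    refine mul_right_cancel₀ (mul_ne_zero (qfact_ne_zero m) (qfact_ne_zero k)) ?_
    have h₁ := qbinom_add_mul_qfact_mul_qfact m (k + 1)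
    have h₂ := qbinom_add_mul_qfact_mul_qfact (m + 1) k
    rw [show m + (k + 1) = k + m + 1 by ring, qfact_succ k] at h₁
    rw [show m + 1 + k = k + m + 1 by ring, qfact_succ m] at h₂
    rw [← one_sub_X_mul_qint, ← one_sub_X_mul_qint, show k + m + 1 - k = m + 1 by omega]
    linear_combination (1 - X) * (h₁ - h₂)
  · rw [qbinom_eq_zero_of_lt (by omega), Nat.sub_eq_zero_of_le hk]
    simp

lemma qbinom_mul_succ_eq (n k : ℕ) :
    qbinom n k * (1 - X ^ (n + 1)) = qbinom (n + 1) k * (1 - X ^ (n + 1 - k)) := by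
  rcases le_or_gt k n with hk | hk
  · obtain ⟨m, rfl⟩ := Nat.exists_eq_add_of_le' hk
    refine mul_right_cancel₀ (mul_ne_zero (qfact_ne_zero m) (qfact_ne_zero k)) ?_
    have h₁ := qbinom_add_mul_qfact_mul_qfact m k
    have h₂ := qbinom_add_mul_qfact_mul_qfact (m + 1) k
    rw [Nat.add_right_comm, qfact_succ m, qfact_succ (m + k)] at h₂
    rw [← one_sub_X_mul_qint, ← one_sub_X_mul_qint, show m + k + 1 - k = m + 1 by omega]
    linear_combination (1 - X) * (qint (m + k + 1) * h₁ - h₂)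
  · rcases eq_or_lt_of_le (Nat.succ_le_of_lt hk) with rfl | hk'
    · simp [qbinom_self, qbinom_eq_zero_of_lt hk]
    · simp [qbinom_eq_zero_of_lt hk, qbinom_eq_zero_of_lt hk']

lemma add_one_mul_qbinom_eq (n k : ℕ) :
    (1 - X ^ (n + 1)) * qbinom n k = qbinom (n + 1) (k + 1) * (1 - X ^ (k + 1)) := by
  rw [qbinom_succ_right_eq, mul_comm, qbinom_mul_succ_eq]

lemma cast_choose_two_succ (n : ℕ) :
    (((n + 1).choose 2 : ℕ) : ℤ) = (n.choose 2 : ℕ) + n := by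
  rw [Nat.choose_succ_succ', Nat.choose_one_right]
  push_cast
  ring

section Pfaff

open LaurentPolynomial

variable (a b k : ℕ)

/-- `[a+b+1 choose b-k]_q` in the form `[a+b+1 choose a+k+1]_q`, which vanishes at `k = b + 1`,
where the truncated `b - k` would give `[a+b+1 choose 0]_q = 1`. -/
noncomputable def pfaffTerm : ℤ[X] :=
  qbinom (a + b + 1) (a + k + 1) * qbinom (a + k) a * qbinom (a + k) b

lemma pfaffTerm_mul_eq :
    pfaffTerm a b k * (1 - X ^ (a + k + 1)) =
      qbinom (a + b + 1) (a + k + 1) * qbinom (a + k) a * qbinom (a + k + 1) b *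
        (1 - X ^ (a + k + 1 - b)) := by
  rw [pfaffTerm, mul_assoc, qbinom_mul_succ_eq, ← mul_assoc]

lemma pfaffTerm_succ_left_mul_eq :
    pfaffTerm (a + 1) b k * (1 - X ^ (a + k + 2)) * (1 - X ^ (a + 1)) =
      qbinom (a + b + 1) (a + k + 1) * qbinom (a + k) a * qbinom (a + k + 1) b *
        (1 - X ^ (a + b + 2)) * (1 - X ^ (a + k + 1)) := by
  have h₁ := add_one_mul_qbinom_eq (a + b + 1) (a + k + 1)
  have h₂ := add_one_mul_qbinom_eq (a + k) a
  simp only [pfaffTerm, show a + 1 + b + 1 = a + b + 1 + 1 by ring,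
    show a + 1 + k = a + k + 1 by ring]
  linear_combination
    -(qbinom (a + k + 1) (a + 1) * qbinom (a + k + 1) b * (1 - X ^ (a + 1))) * h₁
      - (qbinom (a + b + 1) (a + k + 1) * qbinom (a + k + 1) b * (1 - X ^ (a + b + 2))) * h₂

lemma pfaffTerm_succ_right_mul_eq :
    pfaffTerm a b (k + 1) * (1 - X ^ (a + k + 2)) * (1 - X ^ (k + 1)) =
      qbinom (a + b + 1) (a + k + 1) * qbinom (a + k) a * qbinom (a + k + 1) b *
        (1 - X ^ (b - k)) * (1 - X ^ (a + k + 1)) := by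
  have h₁ := qbinom_succ_right_eq (a + b + 1) (a + k + 1)
  have h₂ := qbinom_mul_succ_eq (a + k) a
  rw [show a + b + 1 - (a + k + 1) = b - k by omega] at h₁
  rw [show a + k + 1 - a = k + 1 by omega] at h₂
  simp only [pfaffTerm, show a + (k + 1) = a + k + 1 by ring]
  linear_combination
    (qbinom (a + k + 1) a * qbinom (a + k + 1) b * (1 - X ^ (k + 1))) * h₁
      - (qbinom (a + b + 1) (a + k + 1) * qbinom (a + k + 1) b * (1 - X ^ (b - k))) * h₂

/- All three terms are multiples of `[a+b+1, a+k+1] [a+k, a] [a+k+1, b]` by quotients of factors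
`1 - q^m`. Splitting off `b = k` and writing `b = k + j + 1`, `a = j + i` otherwise turns every
exponent into a sum of variables, so that `ring` can compare the coefficients. -/
lemma pfaffTerm_recurrence (hk : k ≤ b) :
    X ^ k * (1 - X ^ (a + 1)) ^ 2 * (pfaffTerm (a + 1) b k - X ^ b * pfaffTerm a b k) =
      X ^ k * (1 - X ^ (k + 1)) * (1 - X ^ (2 * a + k + 3)) * pfaffTerm a b (k + 1) +
        X ^ b * (1 - X ^ k) * (1 - X ^ (2 * a + k + 2)) * pfaffTerm a b k := by
  rcases lt_or_ge (a + k + 1) b with hb | hb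
  · simp [pfaffTerm, qbinom_eq_zero_of_lt (show a + 1 + k < b by omega),
      qbinom_eq_zero_of_lt (show a + (k + 1) < b by omega),
      qbinom_eq_zero_of_lt (show a + k < b by omega)]
  have h₀ := pfaffTerm_mul_eq a b k
  have h₁ := pfaffTerm_succ_left_mul_eq a b k
  have h₂ := pfaffTerm_succ_right_mul_eq a b k
  refine mul_left_cancel₀ (mul_ne_zero (mul_ne_zero (one_sub_X_pow_succ_ne_zero (a + k + 1))
    (one_sub_X_pow_succ_ne_zero k)) (one_sub_X_pow_succ_ne_zero (a + k))) ?_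
  rcases hk.eq_or_lt with rfl | hkb
  · rw [show a + k + 1 - k = a + 1 by omega] at h₀
    rw [Nat.sub_self] at h₂
    linear_combination
      (X ^ k * (1 - X ^ (a + 1)) * (1 - X ^ (k + 1)) * (1 - X ^ (a + k + 1))) * h₁
        - (X ^ k * (1 - X ^ (k + 1)) * (1 - X ^ (2 * a + k + 3)) * (1 - X ^ (a + k + 1))) * h₂
        - ((1 - X ^ (a + k + 2)) * (1 - X ^ (k + 1)) * (X ^ (k + k) * (1 - X ^ (a + 1)) ^ 2
          + X ^ k * (1 - X ^ k) * (1 - X ^ (2 * a + k + 2)))) * h₀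
  · obtain ⟨j, rfl⟩ : ∃ j, b = k + j + 1 := ⟨b - k - 1, by omega⟩
    obtain ⟨i, rfl⟩ : ∃ i, a = j + i := ⟨a - j, by omega⟩
    rw [show j + i + k + 1 - (k + j + 1) = i by omega] at h₀
    rw [show k + j + 1 - k = j + 1 by omega] at h₂
    linear_combination
      (X ^ k * (1 - X ^ (j + i + 1)) * (1 - X ^ (k + 1)) * (1 - X ^ (j + i + k + 1))) * h₁
        - (X ^ k * (1 - X ^ (k + 1)) * (1 - X ^ (2 * (j + i) + k + 3))
          * (1 - X ^ (j + i + k + 1))) * h₂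
        - ((1 - X ^ (j + i + k + 2)) * (1 - X ^ (k + 1))
          * (X ^ (k + (k + j + 1)) * (1 - X ^ (j + i + 1)) ^ 2
            + X ^ (k + j + 1) * (1 - X ^ k) * (1 - X ^ (2 * (j + i) + k + 2)))) * h₀

def pfaffExp : ℤ := (k : ℤ) * ((a : ℤ) - b + k) + a + k - ((a + k + 1).choose 2 : ℤ)

lemma pfaffExp_succ_left : pfaffExp (a + 1) b k = pfaffExp a b k - a := by
  rw [pfaffExp, pfaffExp, show a + 1 + k + 1 = a + k + 1 + 1 by ring, cast_choose_two_succ]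
  push_cast
  ring

lemma pfaffExp_succ_right : pfaffExp a b (k + 1) = pfaffExp a b k + k + 1 - b := by
  rw [pfaffExp, pfaffExp, show a + (k + 1) + 1 = a + k + 1 + 1 by ring, cast_choose_two_succ]
  push_cast
  ring

noncomputable def pfaffCert : LaurentPolynomial ℤ :=
  (-1) ^ k * T (pfaffExp a b k + b - k) *
    toLaurent ((1 - X ^ k) * (1 - X ^ (2 * a + k + 2)) * pfaffTerm a b k)

lemma pfaffCert_zero_right : pfaffCert a b 0 = 0 := by
  simp [pfaffCert]

lemma pfaffCert_succ_self : pfaffCert a b (b + 1) = 0 := by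
  simp [pfaffCert, pfaffTerm, qbinom_eq_zero_of_lt (show a + b + 1 < a + (b + 1) + 1 by omega)]

lemma pfaffCert_sub_pfaffCert_succ (hk : k ≤ b) :
    pfaffCert a b k - pfaffCert a b (k + 1) = (-1) ^ k * T (pfaffExp a b k) *
      toLaurent ((1 - X ^ (a + 1)) ^ 2 * (pfaffTerm (a + 1) b k - X ^ b * pfaffTerm a b k)) := by
  set u : LaurentPolynomial ℤ := T (pfaffExp a b k - k)
  have shift (n : ℕ) (e : ℤ) (he : e = pfaffExp a b k - k + n) : T e = u * toLaurent X ^ n := by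
    rw [toLaurent_X, T_pow, ← T_add, he, mul_one]
  rw [pfaffCert, pfaffCert, shift k (pfaffExp a b k) (by ring), shift b _ (by ring),
    shift k _ (by rw [pfaffExp_succ_right]; push_cast; ring)]
  calc _ = (-1) ^ k * u *
        toLaurent (X ^ k * (1 - X ^ (k + 1)) * (1 - X ^ (2 * a + k + 3)) * pfaffTerm a b (k + 1) +
          X ^ b * (1 - X ^ k) * (1 - X ^ (2 * a + k + 2)) * pfaffTerm a b k) := by
        simp only [map_add, map_sub, map_mul, map_pow, map_one]
        ring
    _ = _ := by
        rw [← pfaffTerm_recurrence a b k hk]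
        simp only [map_sub, map_mul, map_pow]
        ring

noncomputable def pfaffSum : LaurentPolynomial ℤ :=
  ∑ k ∈ range (b + 1), toLaurent (pfaffTerm a b k) * (-1) ^ k * T (pfaffExp a b k)

lemma sum_pfaffTerm_succ_left_sub :
    ∑ k ∈ range (b + 1), (-1) ^ k * T (pfaffExp a b k) *
      toLaurent (pfaffTerm (a + 1) b k - X ^ b * pfaffTerm a b k) = 0 := by
  have hne : toLaurent ((1 - X ^ (a + 1)) ^ 2 : ℤ[X]) ≠ 0 :=
    toLaurent_ne_zero.mpr (pow_ne_zero 2 (one_sub_X_pow_succ_ne_zero a))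
  refine (mul_eq_zero.mp ?_).resolve_left hne
  rw [mul_sum]
  calc _ = ∑ k ∈ range (b + 1), (pfaffCert a b k - pfaffCert a b (k + 1)) := by
        refine sum_congr rfl fun k hk => ?_
        rw [pfaffCert_sub_pfaffCert_succ a b k (Nat.lt_succ_iff.mp (mem_range.mp hk)), map_mul]
        ring
    _ = 0 := by rw [sum_range_sub', pfaffCert_zero_right, pfaffCert_succ_self, sub_zero]

lemma pfaffSum_succ_left : pfaffSum (a + 1) b = T ((b : ℤ) - a) * pfaffSum a b := by
  rw [← sub_eq_zero, pfaffSum, pfaffSum, mul_sum, ← sum_sub_distrib]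
  calc _ = T (-a) * ∑ k ∈ range (b + 1), (-1) ^ k * T (pfaffExp a b k) *
        toLaurent (pfaffTerm (a + 1) b k - X ^ b * pfaffTerm a b k) := by
        rw [mul_sum]
        refine sum_congr rfl fun k _ => ?_
        rw [pfaffExp_succ_left, T_sub, T_sub]
        simp only [map_sub, map_mul, toLaurent_X_pow]
        ring
    _ = 0 := by rw [sum_pfaffTerm_succ_left_sub, mul_zero]

lemma pfaffSum_zero_left : pfaffSum 0 b = (-1) ^ b * T (-(b.choose 2 : ℤ)) := by
  rw [pfaffSum, sum_range_succ, sum_eq_zero fun k hk => ?_]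
  · simp only [pfaffTerm, pfaffExp, Nat.zero_add, qbinom_self, qbinom_zero_right, mul_one, map_one]
    rw [cast_choose_two_succ]
    push_cast
    ring_nf
  · simp [pfaffTerm, qbinom_eq_zero_of_lt (mem_range.mp hk)]

lemma pfaffSum_eq :
    pfaffSum a b = (-1) ^ b * T ((a : ℤ) * b - (a.choose 2 : ℤ) - (b.choose 2 : ℤ)) := by
  induction a with
  | zero => simp [pfaffSum_zero_left]
  | succ a ih =>
    rw [pfaffSum_succ_left, ih, mul_left_comm, ← T_add, cast_choose_two_succ]
    push_cast
    ring_nf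

end Pfaff

open LaurentPolynomial in
/-- `∑_{k=0}^{b} [a+b+1 choose b-k]_q [a+k choose a]_q [a+k choose b]_q
  (-1)^k q^{k(a-b+k)+a+k-C(a+k+1,2)} = (-1)^b q^{ab - C(a,2) - C(b,2)}` in `ℤ[q,q^{-1}]`. -/
theorem stmt12 (a b : ℕ) :
    ∑ k ∈ Finset.range (b + 1),
        Polynomial.toLaurent (qbinom (a + b + 1) (b - k) * qbinom (a + k) a * qbinom (a + k) b) *
          (-1) ^ k *
          T ((k : ℤ) * ((a : ℤ) - b + k) + a + k - ((a + k + 1).choose 2 : ℤ)) =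
      (-1) ^ b * T ((a : ℤ) * b - (a.choose 2 : ℤ) - (b.choose 2 : ℤ)) := by
  rw [← pfaffSum_eq, pfaffSum]
  refine sum_congr rfl fun k hk => ?_
  have hkb : k ≤ b := Nat.lt_succ_iff.mp (mem_range.mp hk)
  have hsymm : qbinom (a + b + 1) (b - k) = qbinom (a + b + 1) (a + k + 1) := by
    rw [show a + b + 1 = b - k + (a + k + 1) by omega, qbinom_symm_add]
  rw [hsymm, pfaffTerm, pfaffExp]
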